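/- arXiv:2012.15752 — 11 statements merged into one kernel-verified Lean document; each statement's English description precedes it below -/
import Mathlib

section
/- Let I be a fuzzy implication satisfying the ordering property (OP). Then the following are equivalent: (i) I satisfies the functional equation (IE), i.e. I(I(y,x), I(x,y)) = I(x,y) for all x, y ∈ [0,1]; (ii) I satisfies the left neutrality property on its range, i.e. I(1, α) = α for every α in the range of I. -/
open Set

/-- For a fuzzy implication `I` satisfying the ordering property (OP),
`I` satisfies (IE) iff `I` has the left neutrality property on its range. -/
theorem stmt_0 (I : ℝ → ℝ → ℝ)
    (hmap : ∀ x ∈ Icc (0:ℝ) 1, ∀ y ∈ Icc (0:ℝ) 1, I x y ∈ Icc (0:ℝ) 1)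
    (hI1 : ∀ y ∈ Icc (0:ℝ) 1, ∀ x₁ ∈ Icc (0:ℝ) 1, ∀ x₂ ∈ Icc (0:ℝ) 1,
      x₁ ≤ x₂ → I x₂ y ≤ I x₁ y)
    (hI2 : ∀ x ∈ Icc (0:ℝ) 1, ∀ y₁ ∈ Icc (0:ℝ) 1, ∀ y₂ ∈ Icc (0:ℝ) 1,
      y₁ ≤ y₂ → I x y₁ ≤ I x y₂)
    (h00 : I 0 0 = 1) (h11 : I 1 1 = 1) (h10 : I 1 0 = 0)
    (hOP : ∀ x ∈ Icc (0:ℝ) 1, ∀ y ∈ Icc (0:ℝ) 1, (I x y = 1 ↔ x ≤ y)) :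
    (∀ x ∈ Icc (0:ℝ) 1, ∀ y ∈ Icc (0:ℝ) 1, I (I y x) (I x y) = I x y) ↔
    (∀ x ∈ Icc (0:ℝ) 1, ∀ y ∈ Icc (0:ℝ) 1, I 1 (I x y) = I x y) := by
  have h1mem : (1:ℝ) ∈ Icc (0:ℝ) 1 := by constructor <;> norm_num
  constructor
  · intro hIE x hx y hy
    rcases le_or_gt x y with hxy | hyx
    · have h1 : I x y = 1 := (hOP x hx y hy).mpr hxy
      rw [h1, h11]
    · have h1 : I y x = 1 := (hOP y hy x hx).mpr hyx.le
      have := hIE x hx y hy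
      rwa [h1] at this
  · intro hNP x hx y hy
    rcases le_or_gt x y with hxy | hyx
    · have h1 : I x y = 1 := (hOP x hx y hy).mpr hxy
      rw [h1]
      exact (hOP (I y x) (hmap y hy x hx) 1 h1mem).mpr (hmap y hy x hx).2
    · have h1 : I y x = 1 := (hOP y hy x hx).mpr hyx.le
      rw [h1]
      exact hNP x hx y hy
end

section
/- Let T be a t-norm and let I_T be the R-implication generated from T, defined by I_T(x,y) = sup{ t ∈ [0,1] : T(x,t) ≤ y }. Then I_T satisfies the functional equation (IE), i.e. I_T(I_T(y,x), I_T(x,y)) = I_T(x,y) for all x, y ∈ [0,1]. -/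
open Set

/-- The R-implication generated from a t-norm `T` satisfies (IE). -/
theorem stmt_1 (T : ℝ → ℝ → ℝ)
    (hmap : ∀ x ∈ Icc (0:ℝ) 1, ∀ y ∈ Icc (0:ℝ) 1, T x y ∈ Icc (0:ℝ) 1)
    (hcomm : ∀ x ∈ Icc (0:ℝ) 1, ∀ y ∈ Icc (0:ℝ) 1, T x y = T y x)
    (hassoc : ∀ x ∈ Icc (0:ℝ) 1, ∀ y ∈ Icc (0:ℝ) 1, ∀ z ∈ Icc (0:ℝ) 1,
      T (T x y) z = T x (T y z))
    (hmono : ∀ x ∈ Icc (0:ℝ) 1, ∀ y₁ ∈ Icc (0:ℝ) 1, ∀ y₂ ∈ Icc (0:ℝ) 1,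
      y₁ ≤ y₂ → T x y₁ ≤ T x y₂)
    (hmono' : ∀ y ∈ Icc (0:ℝ) 1, ∀ x₁ ∈ Icc (0:ℝ) 1, ∀ x₂ ∈ Icc (0:ℝ) 1,
      x₁ ≤ x₂ → T x₁ y ≤ T x₂ y)
    (hone : ∀ x ∈ Icc (0:ℝ) 1, T x 1 = x)
    (I : ℝ → ℝ → ℝ)
    (hI : ∀ x y, I x y = sSup {t | t ∈ Icc (0:ℝ) 1 ∧ T x t ≤ y}) :
    ∀ x ∈ Icc (0:ℝ) 1, ∀ y ∈ Icc (0:ℝ) 1, I (I y x) (I x y) = I x y := by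
  have h01 : (0:ℝ) ∈ Icc (0:ℝ) 1 := by constructor <;> norm_num
  have h11 : (1:ℝ) ∈ Icc (0:ℝ) 1 := by constructor <;> norm_num
  -- T x 0 = 0
  have hzero : ∀ x ∈ Icc (0:ℝ) 1, T x 0 = 0 := by
    intro x hx
    have h1 : T x 0 ≤ T 0 1 := by
      rw [hcomm x hx 0 h01]
      exact hmono 0 h01 x hx 1 h11 hx.2
    rw [hone 0 h01] at h1
    have h2 := (hmap x hx 0 h01).1
    linarith
  -- bounds on sSup
  have hbdd : ∀ x y : ℝ, BddAbove {t | t ∈ Icc (0:ℝ) 1 ∧ T x t ≤ y} :=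
    fun x y => ⟨1, fun t ht => ht.1.2⟩
  have hImem : ∀ x ∈ Icc (0:ℝ) 1, ∀ y ∈ Icc (0:ℝ) 1, I x y ∈ Icc (0:ℝ) 1 := by
    intro x hx y hy
    rw [hI]
    constructor
    · apply le_csSup (hbdd x y)
      exact ⟨h01, by rw [hzero x hx]; exact hy.1⟩
    · exact csSup_le ⟨0, h01, by rw [hzero x hx]; exact hy.1⟩ (fun t ht => ht.1.2)
  -- if x ≤ y then I x y = 1
  have hIle : ∀ x ∈ Icc (0:ℝ) 1, ∀ y : ℝ, x ≤ y → I x y = 1 := by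
    intro x hx y hxy
    rw [hI]
    apply le_antisymm
    · exact csSup_le ⟨1, h11, by rw [hone x hx]; exact hxy⟩ (fun t ht => ht.1.2)
    · exact le_csSup (hbdd x y) ⟨h11, by rw [hone x hx]; exact hxy⟩
  -- I 1 c = c for c ∈ [0,1]
  have hI1 : ∀ c ∈ Icc (0:ℝ) 1, I 1 c = c := by
    intro c hc
    rw [hI]
    have hTt : ∀ t ∈ Icc (0:ℝ) 1, T 1 t = t := by
      intro t ht
      rw [hcomm 1 h11 t ht, hone t ht]
    apply le_antisymm
    · refine csSup_le ⟨c, hc, le_of_eq (hTt c hc)⟩ ?_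
      rintro t ⟨ht1, ht2⟩
      rwa [hTt t ht1] at ht2
    · exact le_csSup (hbdd 1 c) ⟨hc, by rw [hTt c hc]⟩
  intro x hx y hy
  rcases le_or_gt x y with h | h
  · rw [hIle x hx y h]
    exact hIle (I y x) (hImem y hy x hx) 1 (hImem y hy x hx).2
  · rw [hIle y hy x h.le]
    exact hI1 (I x y) (hImem x hx y hy)
end

section
/- Let N be a fuzzy negation and let I be the (S,N)-implication obtained from the maximum t-conorm S(x,y) = max(x,y) and N, i.e. I(x,y) = max(N(x), y) for all x, y ∈ [0,1]. Then I satisfies the functional equation (IE), i.e. I(I(y,x), I(x,y)) = I(x,y) for all x, y ∈ [0,1]. -/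
open Set

/-- The (S,N)-implication obtained from the maximum t-conorm and a
fuzzy negation `N`, i.e. `I x y = max (N x) y`, satisfies (IE). -/
theorem stmt_2 (N : ℝ → ℝ)
    (hmap : ∀ x ∈ Icc (0:ℝ) 1, N x ∈ Icc (0:ℝ) 1)
    (hanti : ∀ x ∈ Icc (0:ℝ) 1, ∀ y ∈ Icc (0:ℝ) 1, x ≤ y → N y ≤ N x)
    (hN0 : N 0 = 1) (hN1 : N 1 = 0)
    (I : ℝ → ℝ → ℝ)
    (hI : ∀ x y, I x y = max (N x) y) :
    ∀ x ∈ Icc (0:ℝ) 1, ∀ y ∈ Icc (0:ℝ) 1, I (I y x) (I x y) = I x y := by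
  intro x hx y hy
  simp only [hI]
  have hNy := hmap y hy
  have hm : max (N y) x ∈ Icc (0:ℝ) 1 :=
    ⟨le_trans hx.1 (le_max_right _ _), max_le hNy.2 hx.2⟩
  have h1 : N (max (N y) x) ≤ N x := hanti x hx _ hm (le_max_right _ _)
  have : N (max (N y) x) ≤ max (N x) y := le_trans h1 (le_max_left _ _)
  exact max_eq_right this
end

section
/- Let S be a t-conorm and N a fuzzy negation such that the pair (S,N) satisfies the law of excluded middle, i.e. S(N(x), x) = 1 for all x ∈ [0,1]. Then the (S,N)-implication I(x,y) = S(N(x), y) satisfies the functional equation (IE), i.e. I(I(y,x), I(x,y)) = I(x,y) for all x, y ∈ [0,1]. -/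
open Set

/-- If the pair `(S, N)` of a t-conorm and a fuzzy negation satisfies the
law of excluded middle `S (N x) x = 1`, then the (S,N)-implication
`I x y = S (N x) y` satisfies (IE). -/
theorem stmt_4 (S : ℝ → ℝ → ℝ) (N : ℝ → ℝ)
    (hSmap : ∀ x ∈ Icc (0:ℝ) 1, ∀ y ∈ Icc (0:ℝ) 1, S x y ∈ Icc (0:ℝ) 1)
    (hScomm : ∀ x ∈ Icc (0:ℝ) 1, ∀ y ∈ Icc (0:ℝ) 1, S x y = S y x)
    (hSassoc : ∀ x ∈ Icc (0:ℝ) 1, ∀ y ∈ Icc (0:ℝ) 1, ∀ z ∈ Icc (0:ℝ) 1,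
      S (S x y) z = S x (S y z))
    (hSmono : ∀ x ∈ Icc (0:ℝ) 1, ∀ y₁ ∈ Icc (0:ℝ) 1, ∀ y₂ ∈ Icc (0:ℝ) 1,
      y₁ ≤ y₂ → S x y₁ ≤ S x y₂)
    (hSmono' : ∀ y ∈ Icc (0:ℝ) 1, ∀ x₁ ∈ Icc (0:ℝ) 1, ∀ x₂ ∈ Icc (0:ℝ) 1,
      x₁ ≤ x₂ → S x₁ y ≤ S x₂ y)
    (hSzero : ∀ x ∈ Icc (0:ℝ) 1, S x 0 = x)
    (hNmap : ∀ x ∈ Icc (0:ℝ) 1, N x ∈ Icc (0:ℝ) 1)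
    (hNanti : ∀ x ∈ Icc (0:ℝ) 1, ∀ y ∈ Icc (0:ℝ) 1, x ≤ y → N y ≤ N x)
    (hN0 : N 0 = 1) (hN1 : N 1 = 0)
    (hLEM : ∀ x ∈ Icc (0:ℝ) 1, S (N x) x = 1)
    (I : ℝ → ℝ → ℝ)
    (hI : ∀ x y, I x y = S (N x) y) :
    ∀ x ∈ Icc (0:ℝ) 1, ∀ y ∈ Icc (0:ℝ) 1, I (I y x) (I x y) = I x y := by
  intro x hx y hy
  have h01 : (0:ℝ) ∈ Icc (0:ℝ) 1 := by constructor <;> norm_num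
  have h11 : (1:ℝ) ∈ Icc (0:ℝ) 1 := by constructor <;> norm_num
  have hNx := hNmap x hx
  have hNy := hNmap y hy
  -- I u v = 1 whenever v ≥ u (u,v in [0,1])
  have hone : ∀ u ∈ Icc (0:ℝ) 1, ∀ v ∈ Icc (0:ℝ) 1, u ≤ v → I u v = 1 := by
    intro u hu v hv huv
    have h1 : S (N u) v ≤ 1 := (hSmap _ (hNmap u hu) _ hv).2
    have h2 : (1:ℝ) ≤ S (N u) v := by
      calc (1:ℝ) = S (N v) v := (hLEM v hv).symm
        _ ≤ S (N u) v := hSmono' v hv _ (hNmap v hv) _ (hNmap u hu)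
              (hNanti u hu v hv huv)
    rw [hI]; linarith
  have haI : I x y ∈ Icc (0:ℝ) 1 := by rw [hI]; exact hSmap _ hNx _ hy
  have hbI : I y x ∈ Icc (0:ℝ) 1 := by rw [hI]; exact hSmap _ hNy _ hx
  rcases le_total x y with hxy | hyx
  · -- I x y = 1, so need S (N (I y x)) 1 = 1
    have ha1 : I x y = 1 := hone x hx y hy hxy
    rw [ha1, hI]
    have hNb := hNmap _ hbI
    have h1 : S (N (I y x)) 1 ≤ 1 := (hSmap _ hNb _ h11).2
    have h2 : (1:ℝ) ≤ S (N (I y x)) 1 := by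
      calc (1:ℝ) = S (N 1) 1 := by rw [hN1]; rw [hScomm 0 h01 1 h11]; exact (hSzero 1 h11).symm
        _ ≤ S (N (I y x)) 1 := hSmono' 1 h11 _ (hNmap 1 h11) _ hNb
            (hNanti _ hbI 1 h11 hbI.2)
    linarith
  · -- I y x = 1, so N (I y x) = 0 and S 0 a = a
    have hb1 : I y x = 1 := hone y hy x hx hyx
    rw [hb1, hI, hN1, hScomm 0 h01 _ haI, hSzero _ haI]
end

section
/- Let I be a QL-implication, i.e. I(x,y) = S(N(x), T(x,y)) for a t-norm T, a t-conorm S and a fuzzy negation N, and suppose I is a fuzzy implication. If I satisfies the identity principle (IP), i.e. I(x,x) = 1 for all x ∈ [0,1], then I satisfies the functional equation (IE), i.e. I(I(y,x), I(x,y)) = I(x,y) for all x, y ∈ [0,1]. -/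
open Set

/-- A QL-implication `I x y = S (N x) (T x y)` (which is a fuzzy
implication) satisfying the identity principle (IP) satisfies (IE). -/
theorem stmt_5 (T S : ℝ → ℝ → ℝ) (N : ℝ → ℝ)
    (hTmap : ∀ x ∈ Icc (0:ℝ) 1, ∀ y ∈ Icc (0:ℝ) 1, T x y ∈ Icc (0:ℝ) 1)
    (hTcomm : ∀ x ∈ Icc (0:ℝ) 1, ∀ y ∈ Icc (0:ℝ) 1, T x y = T y x)
    (hTassoc : ∀ x ∈ Icc (0:ℝ) 1, ∀ y ∈ Icc (0:ℝ) 1, ∀ z ∈ Icc (0:ℝ) 1,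
      T (T x y) z = T x (T y z))
    (hTmono : ∀ x ∈ Icc (0:ℝ) 1, ∀ y₁ ∈ Icc (0:ℝ) 1, ∀ y₂ ∈ Icc (0:ℝ) 1,
      y₁ ≤ y₂ → T x y₁ ≤ T x y₂)
    (hTmono' : ∀ y ∈ Icc (0:ℝ) 1, ∀ x₁ ∈ Icc (0:ℝ) 1, ∀ x₂ ∈ Icc (0:ℝ) 1,
      x₁ ≤ x₂ → T x₁ y ≤ T x₂ y)
    (hTone : ∀ x ∈ Icc (0:ℝ) 1, T x 1 = x)
    (hSmap : ∀ x ∈ Icc (0:ℝ) 1, ∀ y ∈ Icc (0:ℝ) 1, S x y ∈ Icc (0:ℝ) 1)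
    (hScomm : ∀ x ∈ Icc (0:ℝ) 1, ∀ y ∈ Icc (0:ℝ) 1, S x y = S y x)
    (hSassoc : ∀ x ∈ Icc (0:ℝ) 1, ∀ y ∈ Icc (0:ℝ) 1, ∀ z ∈ Icc (0:ℝ) 1,
      S (S x y) z = S x (S y z))
    (hSmono : ∀ x ∈ Icc (0:ℝ) 1, ∀ y₁ ∈ Icc (0:ℝ) 1, ∀ y₂ ∈ Icc (0:ℝ) 1,
      y₁ ≤ y₂ → S x y₁ ≤ S x y₂)
    (hSmono' : ∀ y ∈ Icc (0:ℝ) 1, ∀ x₁ ∈ Icc (0:ℝ) 1, ∀ x₂ ∈ Icc (0:ℝ) 1,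
      x₁ ≤ x₂ → S x₁ y ≤ S x₂ y)
    (hSzero : ∀ x ∈ Icc (0:ℝ) 1, S x 0 = x)
    (hNmap : ∀ x ∈ Icc (0:ℝ) 1, N x ∈ Icc (0:ℝ) 1)
    (hNanti : ∀ x ∈ Icc (0:ℝ) 1, ∀ y ∈ Icc (0:ℝ) 1, x ≤ y → N y ≤ N x)
    (hN0 : N 0 = 1) (hN1 : N 1 = 0)
    (I : ℝ → ℝ → ℝ)
    (hI : ∀ x y, I x y = S (N x) (T x y))
    -- `I` is a fuzzy implication:
    (hI1 : ∀ y ∈ Icc (0:ℝ) 1, ∀ x₁ ∈ Icc (0:ℝ) 1, ∀ x₂ ∈ Icc (0:ℝ) 1,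
      x₁ ≤ x₂ → I x₂ y ≤ I x₁ y)
    (hI2 : ∀ x ∈ Icc (0:ℝ) 1, ∀ y₁ ∈ Icc (0:ℝ) 1, ∀ y₂ ∈ Icc (0:ℝ) 1,
      y₁ ≤ y₂ → I x y₁ ≤ I x y₂)
    (h00 : I 0 0 = 1) (h11 : I 1 1 = 1) (h10 : I 1 0 = 0)
    -- identity principle:
    (hIP : ∀ x ∈ Icc (0:ℝ) 1, I x x = 1) :
    ∀ x ∈ Icc (0:ℝ) 1, ∀ y ∈ Icc (0:ℝ) 1, I (I y x) (I x y) = I x y := by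
  have one_mem : (1:ℝ) ∈ Icc (0:ℝ) 1 := by norm_num
  have hmem : ∀ a ∈ Icc (0:ℝ) 1, ∀ b ∈ Icc (0:ℝ) 1, I a b ∈ Icc (0:ℝ) 1 := by
    intro a ha b hb
    rw [hI]
    exact hSmap _ (hNmap a ha) _ (hTmap a ha b hb)
  have hItop : ∀ a ∈ Icc (0:ℝ) 1, I a 1 = 1 := by
    intro a ha
    refine le_antisymm (hmem a ha 1 one_mem).2 ?_
    calc (1:ℝ) = I a a := (hIP a ha).symm
      _ ≤ I a 1 := hI2 a ha a ha 1 one_mem ha.2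
  have hIone : ∀ z ∈ Icc (0:ℝ) 1, I 1 z = z := by
    intro z hz
    rw [hI, hN1, hTcomm 1 one_mem z hz, hTone z hz, hScomm 0 (by norm_num) z hz,
      hSzero z hz]
  intro x hx y hy
  rcases le_total x y with hxy | hyx
  · have h1 : I x y = 1 := by
      refine le_antisymm (hmem x hx y hy).2 ?_
      calc (1:ℝ) = I x x := (hIP x hx).symm
        _ ≤ I x y := hI2 x hx x hx y hy hxy
    rw [h1]
    exact hItop _ (hmem y hy x hx)
  · have h1 : I y x = 1 := by
      refine le_antisymm (hmem y hy x hx).2 ?_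
      calc (1:ℝ) = I y y := (hIP y hy).symm
        _ ≤ I y x := hI2 y hy y hy x hx hyx
    rw [h1]
    exact hIone _ (hmem x hx y hy)
end

section
/- Let I be a QL-implication, i.e. I(x,y) = S(N(x), T(x,y)) for a t-norm T, a t-conorm S and a fuzzy negation N, and suppose I is a fuzzy implication. If S is a positive t-conorm (S(x,y) = 1 implies x = 1 or y = 1), then I equals the Weber implication I_WB, where I_WB(x,y) = y if x = 1 and I_WB(x,y) = 1 if x < 1, and in particular I satisfies the functional equation (IE), i.e. I(I(y,x), I(x,y)) = I(x,y) for all x, y ∈ [0,1]. -/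
open Set

/-- A QL-implication `I x y = S (N x) (T x y)` (which is a fuzzy
implication) built from a positive t-conorm `S` equals the Weber implication `I_WB`,
and in particular satisfies (IE). -/
theorem stmt_6 (T S : ℝ → ℝ → ℝ) (N : ℝ → ℝ)
    (hTmap : ∀ x ∈ Icc (0:ℝ) 1, ∀ y ∈ Icc (0:ℝ) 1, T x y ∈ Icc (0:ℝ) 1)
    (hTcomm : ∀ x ∈ Icc (0:ℝ) 1, ∀ y ∈ Icc (0:ℝ) 1, T x y = T y x)
    (hTassoc : ∀ x ∈ Icc (0:ℝ) 1, ∀ y ∈ Icc (0:ℝ) 1, ∀ z ∈ Icc (0:ℝ) 1,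
      T (T x y) z = T x (T y z))
    (hTmono : ∀ x ∈ Icc (0:ℝ) 1, ∀ y₁ ∈ Icc (0:ℝ) 1, ∀ y₂ ∈ Icc (0:ℝ) 1,
      y₁ ≤ y₂ → T x y₁ ≤ T x y₂)
    (hTmono' : ∀ y ∈ Icc (0:ℝ) 1, ∀ x₁ ∈ Icc (0:ℝ) 1, ∀ x₂ ∈ Icc (0:ℝ) 1,
      x₁ ≤ x₂ → T x₁ y ≤ T x₂ y)
    (hTone : ∀ x ∈ Icc (0:ℝ) 1, T x 1 = x)
    (hSmap : ∀ x ∈ Icc (0:ℝ) 1, ∀ y ∈ Icc (0:ℝ) 1, S x y ∈ Icc (0:ℝ) 1)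
    (hScomm : ∀ x ∈ Icc (0:ℝ) 1, ∀ y ∈ Icc (0:ℝ) 1, S x y = S y x)
    (hSassoc : ∀ x ∈ Icc (0:ℝ) 1, ∀ y ∈ Icc (0:ℝ) 1, ∀ z ∈ Icc (0:ℝ) 1,
      S (S x y) z = S x (S y z))
    (hSmono : ∀ x ∈ Icc (0:ℝ) 1, ∀ y₁ ∈ Icc (0:ℝ) 1, ∀ y₂ ∈ Icc (0:ℝ) 1,
      y₁ ≤ y₂ → S x y₁ ≤ S x y₂)
    (hSmono' : ∀ y ∈ Icc (0:ℝ) 1, ∀ x₁ ∈ Icc (0:ℝ) 1, ∀ x₂ ∈ Icc (0:ℝ) 1,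
      x₁ ≤ x₂ → S x₁ y ≤ S x₂ y)
    (hSzero : ∀ x ∈ Icc (0:ℝ) 1, S x 0 = x)
    -- `S` is a positive t-conorm:
    (hSpos : ∀ x ∈ Icc (0:ℝ) 1, ∀ y ∈ Icc (0:ℝ) 1, S x y = 1 → x = 1 ∨ y = 1)
    (hNmap : ∀ x ∈ Icc (0:ℝ) 1, N x ∈ Icc (0:ℝ) 1)
    (hNanti : ∀ x ∈ Icc (0:ℝ) 1, ∀ y ∈ Icc (0:ℝ) 1, x ≤ y → N y ≤ N x)
    (hN0 : N 0 = 1) (hN1 : N 1 = 0)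
    (I : ℝ → ℝ → ℝ)
    (hI : ∀ x y, I x y = S (N x) (T x y))
    -- `I` is a fuzzy implication:
    (hI1 : ∀ y ∈ Icc (0:ℝ) 1, ∀ x₁ ∈ Icc (0:ℝ) 1, ∀ x₂ ∈ Icc (0:ℝ) 1,
      x₁ ≤ x₂ → I x₂ y ≤ I x₁ y)
    (hI2 : ∀ x ∈ Icc (0:ℝ) 1, ∀ y₁ ∈ Icc (0:ℝ) 1, ∀ y₂ ∈ Icc (0:ℝ) 1,
      y₁ ≤ y₂ → I x y₁ ≤ I x y₂)
    (h00 : I 0 0 = 1) (h11 : I 1 1 = 1) (h10 : I 1 0 = 0) :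
    (∀ x ∈ Icc (0:ℝ) 1, ∀ y ∈ Icc (0:ℝ) 1, I x y = if x = 1 then y else 1) ∧
    (∀ x ∈ Icc (0:ℝ) 1, ∀ y ∈ Icc (0:ℝ) 1, I (I y x) (I x y) = I x y) := by

  have h01 : (0:ℝ) ∈ Icc (0:ℝ) 1 := ⟨le_refl 0, zero_le_one⟩
  have h11m : (1:ℝ) ∈ Icc (0:ℝ) 1 := ⟨zero_le_one, le_refl 1⟩
  have hIm : ∀ x ∈ Icc (0:ℝ) 1, ∀ y ∈ Icc (0:ℝ) 1, I x y ∈ Icc (0:ℝ) 1 := by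
    intro x hx y hy
    rw [hI]
    exact hSmap _ (hNmap x hx) _ (hTmap x hx y hy)
  have hS1 : ∀ a ∈ Icc (0:ℝ) 1, S 1 a = 1 := by
    intro a ha
    have h1 := (hSmap 1 h11m a ha).2
    have h2 := hSmono 1 h11m 0 h01 a ha ha.1
    rw [hSzero 1 h11m] at h2
    linarith
  have hI1y : ∀ y ∈ Icc (0:ℝ) 1, I 1 y = y := by
    intro y hy
    rw [hI, hN1, hScomm 0 h01 _ (hTmap 1 h11m y hy), hSzero _ (hTmap 1 h11m y hy),
      hTcomm 1 h11m y hy, hTone y hy]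
  have hIa1 : ∀ a ∈ Icc (0:ℝ) 1, I a 1 = 1 := by
    intro a ha
    have h1 := (hIm a ha 1 h11m).2
    have h2 := hI1 1 h11m a ha 1 h11m ha.2
    rw [h11] at h2
    linarith
  have hW : ∀ x ∈ Icc (0:ℝ) 1, ∀ y ∈ Icc (0:ℝ) 1, I x y = if x = 1 then y else 1 := by
    intro x hx y hy
    split_ifs with h
    · subst h; exact hI1y y hy
    · have hSN : S (N x) x = 1 := by
        have := hIa1 x hx
        rw [hI, hTone x hx] at this
        exact this
      have hNx : N x = 1 := by
        rcases hSpos _ (hNmap x hx) x hx hSN with h' | h'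
        · exact h'
        · exact absurd h' h
      rw [hI, hNx]
      exact hS1 _ (hTmap x hx y hy)
  refine ⟨hW, ?_⟩
  intro x hx y hy
  by_cases hx1 : x = 1
  · subst hx1
    rw [hI1y y hy, hIa1 y hy, hI1y y hy]
  · have hxy : I x y = 1 := by rw [hW x hx y hy, if_neg hx1]
    rw [hxy]
    exact hIa1 _ (hIm y hy x hx)
end

section
/- Let I be a QL-implication built from the minimum t-norm T(x,y) = min(x,y), a t-conorm S and a fuzzy negation N, i.e. I(x,y) = S(N(x), min(x,y)), and suppose I is a fuzzy implication. Then I satisfies the functional equation (IE), i.e. I(I(y,x), I(x,y)) = I(x,y) for all x, y ∈ [0,1]. -/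
open Set

/-- A QL-implication `I x y = S (N x) (min x y)` built from the minimum
t-norm, a t-conorm `S` and a fuzzy negation `N` (which is a fuzzy implication)
satisfies (IE). -/
theorem stmt_7 (S : ℝ → ℝ → ℝ) (N : ℝ → ℝ)
    (hSmap : ∀ x ∈ Icc (0:ℝ) 1, ∀ y ∈ Icc (0:ℝ) 1, S x y ∈ Icc (0:ℝ) 1)
    (hScomm : ∀ x ∈ Icc (0:ℝ) 1, ∀ y ∈ Icc (0:ℝ) 1, S x y = S y x)
    (hSassoc : ∀ x ∈ Icc (0:ℝ) 1, ∀ y ∈ Icc (0:ℝ) 1, ∀ z ∈ Icc (0:ℝ) 1,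
      S (S x y) z = S x (S y z))
    (hSmono : ∀ x ∈ Icc (0:ℝ) 1, ∀ y₁ ∈ Icc (0:ℝ) 1, ∀ y₂ ∈ Icc (0:ℝ) 1,
      y₁ ≤ y₂ → S x y₁ ≤ S x y₂)
    (hSmono' : ∀ y ∈ Icc (0:ℝ) 1, ∀ x₁ ∈ Icc (0:ℝ) 1, ∀ x₂ ∈ Icc (0:ℝ) 1,
      x₁ ≤ x₂ → S x₁ y ≤ S x₂ y)
    (hSzero : ∀ x ∈ Icc (0:ℝ) 1, S x 0 = x)
    (hNmap : ∀ x ∈ Icc (0:ℝ) 1, N x ∈ Icc (0:ℝ) 1)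
    (hNanti : ∀ x ∈ Icc (0:ℝ) 1, ∀ y ∈ Icc (0:ℝ) 1, x ≤ y → N y ≤ N x)
    (hN0 : N 0 = 1) (hN1 : N 1 = 0)
    (I : ℝ → ℝ → ℝ)
    (hI : ∀ x y, I x y = S (N x) (min x y))
    -- `I` is a fuzzy implication:
    (hI1 : ∀ y ∈ Icc (0:ℝ) 1, ∀ x₁ ∈ Icc (0:ℝ) 1, ∀ x₂ ∈ Icc (0:ℝ) 1,
      x₁ ≤ x₂ → I x₂ y ≤ I x₁ y)
    (hI2 : ∀ x ∈ Icc (0:ℝ) 1, ∀ y₁ ∈ Icc (0:ℝ) 1, ∀ y₂ ∈ Icc (0:ℝ) 1,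
      y₁ ≤ y₂ → I x y₁ ≤ I x y₂)
    (h00 : I 0 0 = 1) (h11 : I 1 1 = 1) (h10 : I 1 0 = 0) :
    ∀ x ∈ Icc (0:ℝ) 1, ∀ y ∈ Icc (0:ℝ) 1, I (I y x) (I x y) = I x y := by
  have h01 : (0:ℝ) ∈ Icc (0:ℝ) 1 := by constructor <;> norm_num
  have h11' : (1:ℝ) ∈ Icc (0:ℝ) 1 := by constructor <;> norm_num
  -- range of I
  have hIrange : ∀ x ∈ Icc (0:ℝ) 1, ∀ y ∈ Icc (0:ℝ) 1, I x y ∈ Icc (0:ℝ) 1 := by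
    intro x hx y hy
    rw [hI]
    exact hSmap _ (hNmap x hx) _ ⟨le_min hx.1 hy.1, min_le_of_left_le hx.2⟩
  -- law of excluded middle
  have hLEM : ∀ z ∈ Icc (0:ℝ) 1, S (N z) z = 1 := by
    intro z hz
    have h1 : I z 1 = S (N z) z := by rw [hI, min_eq_left hz.2]
    have h2 : (1:ℝ) ≤ I z 1 := by
      have := hI1 1 h11' z hz 1 h11' hz.2
      rwa [h11] at this
    have h3 : I z 1 ≤ 1 := (hIrange z hz 1 h11').2
    linarith
  -- I 1 z = z for z ∈ [0,1]
  have hI1z : ∀ z ∈ Icc (0:ℝ) 1, I 1 z = z := by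
    intro z hz
    rw [hI, hN1, min_eq_right hz.2, hScomm 0 h01 z hz, hSzero z hz]
  -- I x y = 1 when x ≤ y
  have hIle : ∀ x ∈ Icc (0:ℝ) 1, ∀ y, x ≤ y → I x y = 1 := by
    intro x hx y hxy
    rw [hI, min_eq_left hxy, hLEM x hx]
  intro x hx y hy
  rcases le_total x y with hxy | hyx
  · rw [hIle x hx y hxy]
    exact hIle (I y x) (hIrange y hy x hx) 1 (hIrange y hy x hx).2
  · rw [hIle y hy x hyx, hI1z (I x y) (hIrange x hx y hy)]
end

section
/- Let I be a QL-implication built from a positive t-norm T (T(x,y) = 0 implies x = 0 or y = 0), the drastic t-conorm S_D, and a non-vanishing fuzzy negation N (N(x) = 0 if and only if x = 1), i.e. I(x,y) = S_D(N(x), T(x,y)), and suppose I is a fuzzy implication. Then I satisfies the functional equation (IE), i.e. I(I(y,x), I(x,y)) = I(x,y) for all x, y ∈ [0,1]. -/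
open Set

/-- A QL-implication built from a positive t-norm `T`, the drastic
t-conorm `S_D` and a non-vanishing fuzzy negation `N`,
i.e. `I x y = S_D (N x) (T x y)` (which is a fuzzy implication), satisfies (IE). -/
theorem stmt_8 (T : ℝ → ℝ → ℝ) (N : ℝ → ℝ)
    (hTmap : ∀ x ∈ Icc (0:ℝ) 1, ∀ y ∈ Icc (0:ℝ) 1, T x y ∈ Icc (0:ℝ) 1)
    (hTcomm : ∀ x ∈ Icc (0:ℝ) 1, ∀ y ∈ Icc (0:ℝ) 1, T x y = T y x)
    (hTassoc : ∀ x ∈ Icc (0:ℝ) 1, ∀ y ∈ Icc (0:ℝ) 1, ∀ z ∈ Icc (0:ℝ) 1,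
      T (T x y) z = T x (T y z))
    (hTmono : ∀ x ∈ Icc (0:ℝ) 1, ∀ y₁ ∈ Icc (0:ℝ) 1, ∀ y₂ ∈ Icc (0:ℝ) 1,
      y₁ ≤ y₂ → T x y₁ ≤ T x y₂)
    (hTmono' : ∀ y ∈ Icc (0:ℝ) 1, ∀ x₁ ∈ Icc (0:ℝ) 1, ∀ x₂ ∈ Icc (0:ℝ) 1,
      x₁ ≤ x₂ → T x₁ y ≤ T x₂ y)
    (hTone : ∀ x ∈ Icc (0:ℝ) 1, T x 1 = x)
    -- `T` is a positive t-norm: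
    (hTpos : ∀ x ∈ Icc (0:ℝ) 1, ∀ y ∈ Icc (0:ℝ) 1, T x y = 0 → x = 0 ∨ y = 0)
    (hNmap : ∀ x ∈ Icc (0:ℝ) 1, N x ∈ Icc (0:ℝ) 1)
    (hNanti : ∀ x ∈ Icc (0:ℝ) 1, ∀ y ∈ Icc (0:ℝ) 1, x ≤ y → N y ≤ N x)
    (hN0 : N 0 = 1) (hN1 : N 1 = 0)
    -- `N` is non-vanishing:
    (hNnv : ∀ x ∈ Icc (0:ℝ) 1, (N x = 0 ↔ x = 1))
    -- the drastic t-conorm: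
    (SD : ℝ → ℝ → ℝ)
    (hSD : ∀ x y, SD x y = if x = 0 then y else if y = 0 then x else 1)
    (I : ℝ → ℝ → ℝ)
    (hI : ∀ x y, I x y = SD (N x) (T x y))
    -- `I` is a fuzzy implication:
    (hI1 : ∀ y ∈ Icc (0:ℝ) 1, ∀ x₁ ∈ Icc (0:ℝ) 1, ∀ x₂ ∈ Icc (0:ℝ) 1,
      x₁ ≤ x₂ → I x₂ y ≤ I x₁ y)
    (hI2 : ∀ x ∈ Icc (0:ℝ) 1, ∀ y₁ ∈ Icc (0:ℝ) 1, ∀ y₂ ∈ Icc (0:ℝ) 1,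
      y₁ ≤ y₂ → I x y₁ ≤ I x y₂)
    (h00 : I 0 0 = 1) (h11 : I 1 1 = 1) (h10 : I 1 0 = 0) :
    ∀ x ∈ Icc (0:ℝ) 1, ∀ y ∈ Icc (0:ℝ) 1, I (I y x) (I x y) = I x y := by
  intro x hx y hy
  have h01 : (0:ℝ) ∈ Icc (0:ℝ) 1 := by constructor <;> norm_num
  have h11' : (1:ℝ) ∈ Icc (0:ℝ) 1 := by constructor <;> norm_num
  -- I maps into [0,1]
  have hImem : ∀ a ∈ Icc (0:ℝ) 1, ∀ b ∈ Icc (0:ℝ) 1, I a b ∈ Icc (0:ℝ) 1 := by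
    intro a ha b hb
    rw [hI, hSD]
    split_ifs with h1 h2
    · exact hTmap a ha b hb
    · exact hNmap a ha
    · exact h11'
  -- I 1 t = t
  have hI1t : ∀ t ∈ Icc (0:ℝ) 1, I 1 t = t := by
    intro t ht
    rw [hI, hSD, hN1, if_pos rfl, hTcomm 1 h11' t ht, hTone t ht]
  -- I a 1 = 1
  have hIa1 : ∀ a ∈ Icc (0:ℝ) 1, I a 1 = 1 := by
    intro a ha
    by_cases ha1 : a = 1
    · rw [ha1, h11]
    · have hNa : N a ≠ 0 := fun h => ha1 ((hNnv a ha).1 h)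
      rw [hI, hSD, if_neg hNa, hTone a ha]
      by_cases ha0 : a = 0
      · rw [if_pos ha0, ha0, hN0]
      · rw [if_neg ha0]
  -- if x ≠ 1 and y ≠ 0 then I x y = 1
  have hIpos : ∀ a ∈ Icc (0:ℝ) 1, ∀ b ∈ Icc (0:ℝ) 1, a ≠ 1 → b ≠ 0 → I a b = 1 := by
    intro a ha b hb ha1 hb0
    have hNa : N a ≠ 0 := fun h => ha1 ((hNnv a ha).1 h)
    rw [hI, hSD, if_neg hNa]
    by_cases hT : T a b = 0
    · rw [if_pos hT]
      rcases hTpos a ha b hb hT with h | h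
      · rw [h, hN0]
      · exact absurd h hb0
    · rw [if_neg hT]
  by_cases hx1 : x = 1
  · subst hx1
    rw [hIa1 y hy, hI1t (I 1 y) (hImem 1 h11' y hy)]
  · by_cases hy0 : y = 0
    · subst hy0
      by_cases hx0 : x = 0
      · subst hx0; rw [h00, h11]
      · have ha : I 0 x = 1 := hIpos 0 h01 x hx (by norm_num) hx0
        rw [ha, hI1t (I x 0) (hImem x hx 0 h01)]
    · have hb : I x y = 1 := hIpos x hx y hy hx1 hy0
      rw [hb, hIa1 (I y x) (hImem y hy x hx)]
end

section
/- No f-generated implication satisfies the functional equation (IE). That is, if f : [0,1] → [0,∞] is a strictly decreasing continuous function with f(1) = 0 and I_f(x,y) = f⁻¹(x · f(y)) (with the convention 0 · ∞ = 0), then there exist x, y ∈ [0,1] such that I_f(I_f(y,x), I_f(x,y)) ≠ I_f(x,y). -/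
/-!
Take `x = y`, so that (IE) reads `I t t = t` for `t = I x x`. For `t, x ∈ (0,1)` the value
`t · f x` lies strictly between `0 = f 1` and `f x`, so by the intermediate value theorem it is
`f z` for some `z ∈ (x,1)`, and `I t x = z`. Hence `u = I (1/2) (1/2)` lies in `(0,1)` and
`I u u` lies in `(u,1)`, so `I u u ≠ u`.
-/

open Set
open scoped ENNReal

lemma ENNReal.ofReal_mul_mem_Ioo {t : ℝ} {c : ℝ≥0∞} (ht : t ∈ Ioo 0 1) (hc0 : c ≠ 0)
    (hc : c ≠ ∞) : ENNReal.ofReal t * c ∈ Ioo 0 c :=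
  ⟨ENNReal.mul_pos (ENNReal.ofReal_pos.2 ht.1).ne' hc0,
    by simpa using ENNReal.mul_lt_mul_left hc0 hc (ENNReal.ofReal_lt_one.2 ht.2)⟩

section Generator

variable {f : ℝ → ℝ≥0∞}

lemma StrictAntiOn.apply_ne_top_of_pos (hanti : StrictAntiOn f (Icc 0 1)) {x : ℝ}
    (hx : x ∈ Ioc 0 1) : f x ≠ ∞ :=
  (hanti ⟨le_rfl, zero_le_one⟩ (Ioc_subset_Icc_self hx) hx.1).ne_top

lemma StrictAntiOn.apply_ne_zero_of_lt_one (hanti : StrictAntiOn f (Icc 0 1)) (hf1 : f 1 = 0)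
    {x : ℝ} (hx : x ∈ Ico 0 1) : f x ≠ 0 :=
  (hf1 ▸ hanti (Ico_subset_Icc_self hx) ⟨zero_le_one, le_rfl⟩ hx.2).ne'

lemma exists_mem_Ioo_apply_eq_ofReal_mul (hcont : ContinuousOn f (Icc 0 1))
    (hanti : StrictAntiOn f (Icc 0 1)) (hf1 : f 1 = 0) {t x : ℝ} (ht : t ∈ Ioo 0 1)
    (hx : x ∈ Ioo 0 1) :
    ∃ z ∈ Ioo x 1, f z = ENNReal.ofReal t * f x := by
  have hfx := ENNReal.ofReal_mul_mem_Ioo ht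
    (hanti.apply_ne_zero_of_lt_one hf1 (Ioo_subset_Ico_self hx))
    (hanti.apply_ne_top_of_pos (Ioo_subset_Ioc_self hx))
  have hsub : Icc x 1 ⊆ Icc 0 1 := Icc_subset_Icc_left hx.1.le
  obtain ⟨z, hz, hfz⟩ := intermediate_value_Icc' hx.2.le (hcont.mono hsub)
    ⟨hf1 ▸ hfx.1.le, hfx.2.le⟩
  have hzx : z ≠ x := by rintro rfl; exact hfx.2.ne' hfz
  have hz1 : z ≠ 1 := by rintro rfl; exact hfx.1.ne (hf1 ▸ hfz)
  exact ⟨z, ⟨lt_of_le_of_ne hz.1 hzx.symm, lt_of_le_of_ne hz.2 hz1⟩, hfz⟩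

lemma finv_ofReal_mul_mem_Ioo (hcont : ContinuousOn f (Icc 0 1))
    (hanti : StrictAntiOn f (Icc 0 1)) (hf1 : f 1 = 0) {finv : ℝ≥0∞ → ℝ}
    (hfinv : ∀ x ∈ Icc (0:ℝ) 1, finv (f x) = x) {t x : ℝ} (ht : t ∈ Ioo 0 1)
    (hx : x ∈ Ioo 0 1) : finv (ENNReal.ofReal t * f x) ∈ Ioo x 1 := by
  obtain ⟨z, hz, hfz⟩ := exists_mem_Ioo_apply_eq_ofReal_mul hcont hanti hf1 ht hx
  rw [← hfz, hfinv z ⟨hx.1.le.trans hz.1.le, hz.2.le⟩]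
  exact hz

end Generator

/-- No f-generated implication satisfies (IE): if `f : [0,1] → [0,∞]` is a
strictly decreasing continuous function with `f 1 = 0`, `finv` is its inverse, and
`I x y = f⁻¹ (x * f y)` (with the convention `0 * ∞ = 0`, as in `ℝ≥0∞`), then
there are `x, y ∈ [0,1]` with `I (I y x) (I x y) ≠ I x y`. -/
theorem stmt_9 (f : ℝ → ℝ≥0∞)
    (hcont : ContinuousOn f (Icc (0:ℝ) 1))
    (hanti : StrictAntiOn f (Icc (0:ℝ) 1))
    (hf1 : f 1 = 0)
    (finv : ℝ≥0∞ → ℝ)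
    (hfinv : ∀ x ∈ Icc (0:ℝ) 1, finv (f x) = x)
    (I : ℝ → ℝ → ℝ)
    (hI : ∀ x y, I x y = finv (ENNReal.ofReal x * f y)) :
    ∃ x ∈ Icc (0:ℝ) 1, ∃ y ∈ Icc (0:ℝ) 1, I (I y x) (I x y) ≠ I x y := by
  have hhalf : (1/2 : ℝ) ∈ Ioo 0 1 := ⟨by norm_num, by norm_num⟩
  have hmem : ∀ {t x : ℝ}, t ∈ Ioo 0 1 → x ∈ Ioo 0 1 →
      finv (ENNReal.ofReal t * f x) ∈ Ioo x 1 :=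
    finv_ofReal_mul_mem_Ioo hcont hanti hf1 hfinv
  refine ⟨1/2, Ioo_subset_Icc_self hhalf, 1/2, Ioo_subset_Icc_self hhalf, ?_⟩
  simp only [hI]
  set u := finv (ENNReal.ofReal (1/2) * f (1/2))
  have hu : u ∈ Ioo 0 1 := ⟨hhalf.1.trans (hmem hhalf hhalf).1, (hmem hhalf hhalf).2⟩
  exact (hmem hu hu).1.ne'
end

section
/- Let g : [0,1] → [0,∞] be a g-generator and let I_g be the g-generated implication I_g(x,y) = g^(-1)((1/x) · g(y)). If I_g satisfies the functional equation (IE), i.e. I_g(I_g(y,x), I_g(x,y)) = I_g(x,y) for all x, y ∈ [0,1], then g(1) < ∞. -/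
open Set
open scoped ENNReal

/-!
If `g 1 = ∞`, then `g` maps `[0,1]` onto `[0,∞]` by the intermediate value theorem, so the
pseudo-inverse is a genuine right inverse. For `x = 1/2` the value `a = I x x` satisfies
`g a = 2 g(1/2)`, a positive finite number, and (IE) at `(x, x)` reads `I a a = a`. Applying `g`
gives `g a / a = g a`, hence `a = 1` and `g 1 = 2 g(1/2) < ∞`.
-/

lemma surjOn_Icc_univ_of_eq_top {g : ℝ → ℝ≥0∞} (hcont : ContinuousOn g (Icc 0 1))
    (hg0 : g 0 = 0) (hg1 : g 1 = ⊤) : SurjOn g (Icc 0 1) univ := fun t _ ↦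
  intermediate_value_Icc zero_le_one hcont (by simp [hg0, hg1] : t ∈ Icc (g 0) (g 1))

lemma ENNReal.eq_one_of_inv_ofReal_mul_eq_self {a : ℝ} {t : ℝ≥0∞}
    (h : (ENNReal.ofReal a)⁻¹ * t = t) (ht0 : t ≠ 0) (htop : t ≠ ⊤) : a = 1 := by
  have hinv : (ENNReal.ofReal a)⁻¹ = 1 :=
    (ENNReal.mul_left_inj ht0 htop).mp (h.trans (one_mul t).symm)
  rwa [ENNReal.inv_eq_one, ENNReal.ofReal_eq_one] at hinv

theorem stmt_10_general (g : ℝ → ℝ≥0∞)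
    (hcont : ContinuousOn g (Icc (0:ℝ) 1))
    (hg0 : g 0 = 0)
    (ginv : ℝ≥0∞ → ℝ)
    (hginv : ∀ x ∈ Icc (0:ℝ) 1, ginv (g x) = x)
    (I : ℝ → ℝ → ℝ)
    (hI : ∀ x y, I x y = if x = 0 then 1 else ginv ((ENNReal.ofReal x)⁻¹ * g y))
    (hIE : ∀ x ∈ Icc (0:ℝ) 1, ∀ y ∈ Icc (0:ℝ) 1, I (I y x) (I x y) = I x y) :
    g 1 < ∞ := by
  refine lt_top_iff_ne_top.mpr fun htop ↦ ?_
  have hright : ∀ t, g (ginv t) = t := fun t ↦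
    (surjOn_Icc_univ_of_eq_top hcont hg0 htop).leftInvOn_of_rightInvOn hginv (mem_univ t)
  have hinj : InjOn g (Icc 0 1) := LeftInvOn.injOn hginv
  have hhalf : (1 / 2 : ℝ) ∈ Icc 0 1 := by norm_num
  set t := (ENNReal.ofReal (1 / 2))⁻¹ * g (1 / 2)
  have ht0 : t ≠ 0 :=
    mul_ne_zero (ENNReal.inv_ne_zero.mpr ENNReal.ofReal_ne_top)
      (hg0 ▸ hinj.ne hhalf (by norm_num) (by norm_num))
  have httop : t ≠ ⊤ :=
    ENNReal.mul_ne_top (by simp) (htop ▸ hinj.ne hhalf (by norm_num) (by norm_num))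
  set a := ginv t
  have hga : g a = t := hright t
  have ha0 : a ≠ 0 := fun h ↦ ht0 (by rw [← hga, h, hg0])
  have hIaa : I a a = a := by
    simpa [hI, a, t] using hIE _ hhalf _ hhalf
  have hfix : (ENNReal.ofReal a)⁻¹ * t = t := by
    have := congrArg g hIaa
    rwa [hI, if_neg ha0, hright, hga] at this
  have ha1 : a = 1 := ENNReal.eq_one_of_inv_ofReal_mul_eq_self hfix ht0 httop
  exact httop (by rw [← hga, ha1, htop])

/-- If the g-generated implication `I_g x y = g^(-1) ((1/x) * g y)`
(with the conventions `1/0 = ∞` and `∞ * 0 = ∞`, so that `I_g 0 y = 1`) satisfies (IE),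
then `g 1 < ∞`. Here `ginv` is the pseudo-inverse of the g-generator `g`. -/
theorem stmt_10 (g : ℝ → ℝ≥0∞)
    (hcont : ContinuousOn g (Icc (0:ℝ) 1))
    (hmono : StrictMonoOn g (Icc (0:ℝ) 1))
    (hg0 : g 0 = 0)
    (ginv : ℝ≥0∞ → ℝ)
    (hginv : ∀ x ∈ Icc (0:ℝ) 1, ginv (g x) = x)
    (hginv' : ∀ t : ℝ≥0∞, g 1 ≤ t → ginv t = 1)
    (I : ℝ → ℝ → ℝ)
    (hI : ∀ x y, I x y = if x = 0 then 1 else ginv ((ENNReal.ofReal x)⁻¹ * g y))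
    (hIE : ∀ x ∈ Icc (0:ℝ) 1, ∀ y ∈ Icc (0:ℝ) 1, I (I y x) (I x y) = I x y) :
    g 1 < ∞ :=
  stmt_10_general g hcont hg0 ginv hginv I hI hIE
end

section
/- Let g : [0,1] → [0,∞] be a g-generator and let I_g be the g-generated implication. If I_g satisfies the identity principle (IP), i.e. I_g(x,x) = 1 for all x ∈ [0,1], then I_g satisfies the functional equation (IE), i.e. I_g(I_g(y,x), I_g(x,y)) = I_g(x,y) for all x, y ∈ [0,1]. -/
open Set
open scoped ENNReal

/-!
(IP) says `g 1 ≤ g z / z` for every `z ∈ (0, 1]`, and since `z ↦ 1 / z` is antitone this gives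
`I(y, x) = 1` whenever `y ≤ x`. So for any `x, y` either `I(x, y) = 1`, and (IE) reduces to
`I(v, 1) = 1`, or `I(y, x) = 1`, and (IE) reduces to left neutrality `I(1, w) = w`.
-/

noncomputable def gImpl (g : ℝ → ℝ≥0∞) (ginv : ℝ≥0∞ → ℝ) (x y : ℝ) : ℝ :=
  if x = 0 then 1 else ginv ((ENNReal.ofReal x)⁻¹ * g y)

section GGenerated

variable {g : ℝ → ℝ≥0∞} {ginv : ℝ≥0∞ → ℝ}

lemma ginv_mem_Icc_and_g_ginv_of_lt (hcont : ContinuousOn g (Icc 0 1)) (hg0 : g 0 = 0)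
    (hginv : ∀ x ∈ Icc (0:ℝ) 1, ginv (g x) = x) {t : ℝ≥0∞} (ht : t < g 1) :
    ginv t ∈ Icc 0 1 ∧ g (ginv t) = t := by
  obtain ⟨s, hs, rfl⟩ := intermediate_value_Icc zero_le_one hcont ⟨hg0 ▸ zero_le (a := t), ht.le⟩
  rw [hginv s hs]
  exact ⟨hs, rfl⟩

lemma ginv_mem_Icc (hcont : ContinuousOn g (Icc 0 1)) (hg0 : g 0 = 0)
    (hginv : ∀ x ∈ Icc (0:ℝ) 1, ginv (g x) = x) (hginv' : ∀ t, g 1 ≤ t → ginv t = 1)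
    (t : ℝ≥0∞) : ginv t ∈ Icc 0 1 := by
  rcases lt_or_ge t (g 1) with ht | ht
  · exact (ginv_mem_Icc_and_g_ginv_of_lt hcont hg0 hginv ht).1
  · rw [hginv' t ht]
    exact right_mem_Icc.2 zero_le_one

lemma gImpl_mem_Icc (hcont : ContinuousOn g (Icc 0 1)) (hg0 : g 0 = 0)
    (hginv : ∀ x ∈ Icc (0:ℝ) 1, ginv (g x) = x) (hginv' : ∀ t, g 1 ≤ t → ginv t = 1)
    (x y : ℝ) : gImpl g ginv x y ∈ Icc 0 1 := by
  unfold gImpl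
  split_ifs
  · exact right_mem_Icc.2 zero_le_one
  · exact ginv_mem_Icc hcont hg0 hginv hginv' _

lemma gImpl_zero_left (y : ℝ) : gImpl g ginv 0 y = 1 := if_pos rfl

lemma gImpl_one_left (hginv : ∀ x ∈ Icc (0:ℝ) 1, ginv (g x) = x) {y : ℝ} (hy : y ∈ Icc 0 1) :
    gImpl g ginv 1 y = y := by
  rw [gImpl, if_neg one_ne_zero, ENNReal.ofReal_one, inv_one, one_mul, hginv y hy]

lemma gImpl_one_right (hginv' : ∀ t, g 1 ≤ t → ginv t = 1) {x : ℝ} (hx : x ≤ 1) :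
    gImpl g ginv x 1 = 1 := by
  unfold gImpl
  split_ifs
  · rfl
  · refine hginv' _ (le_mul_of_one_le_left zero_le ?_)
    exact ENNReal.one_le_inv.2 (ENNReal.ofReal_le_one.2 hx)

lemma gImpl_eq_one_iff (hcont : ContinuousOn g (Icc 0 1)) (hg0 : g 0 = 0)
    (hginv : ∀ x ∈ Icc (0:ℝ) 1, ginv (g x) = x) (hginv' : ∀ t, g 1 ≤ t → ginv t = 1)
    {x : ℝ} (hx : x ≠ 0) (y : ℝ) :
    gImpl g ginv x y = 1 ↔ g 1 ≤ (ENNReal.ofReal x)⁻¹ * g y := by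
  rw [gImpl, if_neg hx]
  refine ⟨fun h => ?_, hginv' _⟩
  by_contra! hlt
  have hg := (ginv_mem_Icc_and_g_ginv_of_lt hcont hg0 hginv hlt).2
  rw [h] at hg
  exact hlt.ne' hg

lemma gImpl_eq_one_of_le (hcont : ContinuousOn g (Icc 0 1)) (hg0 : g 0 = 0)
    (hginv : ∀ x ∈ Icc (0:ℝ) 1, ginv (g x) = x) (hginv' : ∀ t, g 1 ≤ t → ginv t = 1)
    {x y : ℝ} (hy : 0 ≤ y) (hyx : y ≤ x) (hxx : gImpl g ginv x x = 1) :
    gImpl g ginv y x = 1 := by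
  rcases hy.eq_or_lt with rfl | hy
  · exact gImpl_zero_left x
  have hx : x ≠ 0 := (hy.trans_le hyx).ne'
  rw [gImpl_eq_one_iff hcont hg0 hginv hginv' hx] at hxx
  rw [gImpl_eq_one_iff hcont hg0 hginv hginv' hy.ne']
  calc g 1 ≤ (ENNReal.ofReal x)⁻¹ * g x := hxx
    _ ≤ (ENNReal.ofReal y)⁻¹ * g x := by gcongr

end GGenerated

theorem stmt_12_general (g : ℝ → ℝ≥0∞)
    (hcont : ContinuousOn g (Icc (0:ℝ) 1))
    (hg0 : g 0 = 0)
    (ginv : ℝ≥0∞ → ℝ)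
    (hginv : ∀ x ∈ Icc (0:ℝ) 1, ginv (g x) = x)
    (hginv' : ∀ t : ℝ≥0∞, g 1 ≤ t → ginv t = 1)
    (I : ℝ → ℝ → ℝ)
    (hI : ∀ x y, I x y = if x = 0 then 1 else ginv ((ENNReal.ofReal x)⁻¹ * g y))
    (hIP : ∀ x ∈ Icc (0:ℝ) 1, I x x = 1) :
    ∀ x ∈ Icc (0:ℝ) 1, ∀ y ∈ Icc (0:ℝ) 1, I (I y x) (I x y) = I x y := by
  obtain rfl : I = gImpl g ginv := funext fun x => funext (hI x)
  intro x hx y hy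
  rcases le_total x y with hxy | hyx
  · rw [gImpl_eq_one_of_le hcont hg0 hginv hginv' hx.1 hxy (hIP y hy)]
    exact gImpl_one_right hginv' (gImpl_mem_Icc hcont hg0 hginv hginv' y x).2
  · rw [gImpl_eq_one_of_le hcont hg0 hginv hginv' hy.1 hyx (hIP x hx)]
    exact gImpl_one_left hginv (gImpl_mem_Icc hcont hg0 hginv hginv' x y)

/-- If the g-generated implication `I_g` satisfies the identity
principle (IP), then it satisfies (IE). Here `ginv` is the pseudo-inverse of the
g-generator `g`, and `I_g` uses the conventions `1/0 = ∞` and `∞ * 0 = ∞`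
(so that `I 0 y = 1`). -/
theorem stmt_12 (g : ℝ → ℝ≥0∞)
    (hcont : ContinuousOn g (Icc (0:ℝ) 1))
    (hmono : StrictMonoOn g (Icc (0:ℝ) 1))
    (hg0 : g 0 = 0)
    (ginv : ℝ≥0∞ → ℝ)
    (hginv : ∀ x ∈ Icc (0:ℝ) 1, ginv (g x) = x)
    (hginv' : ∀ t : ℝ≥0∞, g 1 ≤ t → ginv t = 1)
    (I : ℝ → ℝ → ℝ)
    (hI : ∀ x y, I x y = if x = 0 then 1 else ginv ((ENNReal.ofReal x)⁻¹ * g y))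
    (hIP : ∀ x ∈ Icc (0:ℝ) 1, I x x = 1) :
    ∀ x ∈ Icc (0:ℝ) 1, ∀ y ∈ Icc (0:ℝ) 1, I (I y x) (I x y) = I x y :=
  stmt_12_general g hcont hg0 ginv hginv hginv' I hI hIP
end
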